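/- arXiv:2307.05315 — 2 statements merged into one kernel-verified Lean document; each statement's English description precedes it below -/
import Mathlib

section
/- Let M = [ℓ₁]₀ × [ℓ₂]₀ with 1 < ℓ₁ and ℓ₂ = ℓ₁ + 1, equipped with a rank increasing and rank constant weight function. Then every initial segment of the lexicographic order is a maximum weight downset of its size. -/
open Finset

def box (l1 l2 : ℕ) : Finset (ℕ × ℕ) := Finset.range l1 ×ˢ Finset.range l2

def IsDownset (B A : Finset (ℕ × ℕ)) : Prop :=
  A ⊆ B ∧ ∀ p ∈ B, ∀ q ∈ A, p.1 ≤ q.1 → p.2 ≤ q.2 → p ∈ A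

def lexLT (p q : ℕ × ℕ) : Prop := p.1 < q.1 ∨ (p.1 = q.1 ∧ p.2 < q.2)

def colexLT (p q : ℕ × ℕ) : Prop := p.2 < q.2 ∨ (p.2 = q.2 ∧ p.1 < q.1)

def IsInitSeg (B A : Finset (ℕ × ℕ)) (lt : ℕ × ℕ → ℕ × ℕ → Prop) : Prop :=
  A ⊆ B ∧ ∀ p ∈ B, ∀ q ∈ A, lt p q → p ∈ A

def RankConstantOn (B : Finset (ℕ × ℕ)) (wt : ℕ × ℕ → ℝ) : Prop :=
  ∀ p ∈ B, ∀ q ∈ B, p.1 + p.2 = q.1 + q.2 → wt p = wt q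

def RankIncreasingOn (B : Finset (ℕ × ℕ)) (wt : ℕ × ℕ → ℝ) : Prop :=
  ∀ p ∈ B, ∀ q ∈ B, p.1 + p.2 < q.1 + q.2 → wt p < wt q

def wtSum (wt : ℕ × ℕ → ℝ) (A : Finset (ℕ × ℕ)) : ℝ := ∑ p ∈ A, wt p

def IsOptimalDownset (B : Finset (ℕ × ℕ)) (wt : ℕ × ℕ → ℝ) (A : Finset (ℕ × ℕ)) : Prop :=
  IsDownset B A ∧ ∀ C : Finset (ℕ × ℕ), IsDownset B C → C.card = A.card →
    wtSum wt C ≤ wtSum wt A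

def triangle (l : ℕ) : Finset (ℕ × ℕ) := (box l l).filter (fun p => p.1 ≤ p.2)

def OV (b t n : ℕ) : ℕ :=
  (∑ x ∈ Finset.range (n / b), (b - (t - x))) + (n % b - (t - n / b))

lemma sum_shift (b1 t K : ℕ) :
    (∑ i ∈ Finset.range K, ((b1 + 1) - (t - i)))
      = (∑ i ∈ Finset.range K, (b1 - ((t - 1) - i))) + (K - t) := by
  induction K with
  | zero => simp
  | succ K ih =>
    rw [Finset.sum_range_succ, Finset.sum_range_succ]
    omega

lemma SL' (b1 u k m t : ℕ) (hu : u ≤ b1) (hm : m < b1) (hk : k ≤ u)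
    (huk : u = k → m = 0) :
    (u - t) + ((∑ i ∈ Finset.range k, (b1 - ((t - 1) - i))) + (m - ((t - 1) - k)))
      ≤ OV (b1 + 1) t (u + (b1 * k + m)) := by
  have hmul1 : (b1 + 1) * k = b1 * k + k := by ring
  rcases lt_or_ge ((u - k) + m) (b1 + 1) with hwB | hwB
  · have hn : u + (b1 * k + m) = (b1 + 1) * k + ((u - k) + m) := by omega
    have hdiv : (u + (b1 * k + m)) / (b1 + 1) = k := by
      rw [hn, Nat.mul_add_div (by omega), Nat.div_eq_of_lt hwB]; try omega
    have hmod : (u + (b1 * k + m)) % (b1 + 1) = (u - k) + m := by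
      rw [hn, Nat.mul_add_mod, Nat.mod_eq_of_lt hwB]
    rw [OV, hdiv, hmod, sum_shift]
    rcases Nat.eq_or_lt_of_le hk with he | _
    · have := huk he.symm
      omega
    · omega
  · have hmul2 : (b1 + 1) * (k + 1) = b1 * k + k + b1 + 1 := by ring
    have hn : u + (b1 * k + m) = (b1 + 1) * (k + 1) + ((u - k) + m - (b1 + 1)) := by
      omega
    have hdiv : (u + (b1 * k + m)) / (b1 + 1) = k + 1 := by
      rw [hn, Nat.mul_add_div (by omega), Nat.div_eq_of_lt (by omega)]; try omega
    have hmod : (u + (b1 * k + m)) % (b1 + 1) = (u - k) + m - (b1 + 1) := by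
      rw [hn, Nat.mul_add_mod, Nat.mod_eq_of_lt (by omega)]
    rw [OV, hdiv, hmod, Finset.sum_range_succ, sum_shift]
    rcases Nat.eq_or_lt_of_le hk with he | _
    · have := huk he.symm
      omega
    · omega

lemma SL (B u N t : ℕ) (hu : u < B) (hN : N ≤ (B - 1) * u) :
    (u - t) + OV (B - 1) (t - 1) N ≤ OV B t (u + N) := by
  rcases Nat.lt_or_ge B 2 with hB1 | hB2
  · have hB : B = 1 := by omega
    subst hB
    have hu0 : u = 0 := by omega
    have hN0 : N = 0 := by simpa [hu0] using hN
    subst hu0; subst hN0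
    simp [OV]
  · obtain ⟨b1, rfl⟩ : ∃ b1, B = b1 + 1 := ⟨B - 1, by omega⟩
    have hb1 : b1 + 1 - 1 = b1 := by omega
    rw [hb1] at hN ⊢
    have hb1pos : 0 < b1 := by omega
    obtain ⟨k, m, hN', hm⟩ : ∃ k m, N = b1 * k + m ∧ m < b1 :=
      ⟨N / b1, N % b1, by rw [Nat.div_add_mod], Nat.mod_lt _ hb1pos⟩
    subst hN'
    have hk : k ≤ u := by
      by_contra hc
      push_neg at hc
      have : b1 * (u + 1) ≤ b1 * k := Nat.mul_le_mul_left _ hc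
      have h2 : b1 * (u + 1) = b1 * u + b1 := by ring
      omega
    have huk : u = k → m = 0 := by
      intro h
      rw [← h] at hN
      have h2 : b1 * k = b1 * u := by rw [h]
      omega
    have hOVin : OV b1 (t - 1) (b1 * k + m)
        = (∑ i ∈ Finset.range k, (b1 - ((t - 1) - i))) + (m - ((t - 1) - k)) := by
      have hdiv : (b1 * k + m) / b1 = k := by
        rw [Nat.mul_add_div hb1pos, Nat.div_eq_of_lt hm]; try omega
      have hmod : (b1 * k + m) % b1 = m := by
        rw [Nat.mul_add_mod, Nat.mod_eq_of_lt hm]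
      rw [OV, hdiv, hmod]
    rw [hOVin]
    exact SL' b1 u k m t (by omega) hm hk huk

lemma OV_zero (b t : ℕ) : OV b t 0 = 0 := by
  simp [OV]

lemma OV_rec (b t n : ℕ) (hb : 1 ≤ b) (hn : b ≤ n) :
    OV b t n = (b - t) + OV b (t - 1) (n - b) := by
  have h0 : n = (n - b) + b := by omega
  have hdiv : n / b = (n - b) / b + 1 := by
    conv_lhs => rw [h0]
    rw [Nat.add_div_right _ (by omega)]
  have hmod : n % b = (n - b) % b := by
    conv_lhs => rw [h0]
    rw [Nat.add_mod_right]
  rw [OV, OV, hdiv, hmod, Finset.sum_range_succ']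
  have he : ∀ x ∈ Finset.range ((n - b) / b), (b - (t - (x + 1))) = (b - ((t-1) - x)) := by
    intro x _
    congr 1
    omega
  rw [Finset.sum_congr rfl he]
  have : t - (0:ℕ) = t := by omega
  rw [this]
  have h2 : t - ((n-b)/b + 1) = (t - 1) - ((n-b)/b) := by omega
  rw [h2]
  ring

lemma core : ∀ (a : ℕ) (b t : ℕ) (c : ℕ → ℕ), a ≤ b → (∀ x, x < a → c x ≤ b) →
    (∀ x y, x ≤ y → y < a → c y ≤ c x) →
    (∑ x ∈ Finset.range a, (c x - (t - x))) ≤ OV b t (∑ x ∈ Finset.range a, c x) := by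
  intro a
  induction a with
  | zero => intro b t c _ _ _; simp [OV_zero]
  | succ a ih =>
    intro b t c hab hle hmono
    rw [Finset.sum_range_succ', Finset.sum_range_succ' c]
    have hre : ∀ x ∈ Finset.range a, (c (x + 1) - (t - (x + 1)))
        = (c (x + 1) - ((t - 1) - x)) := by
      intro x _; congr 1; omega
    rw [Finset.sum_congr rfl hre]
    have hc0 : t - (0:ℕ) = t := by omega
    rw [hc0]
    have htail : ∀ x, x < a → c (x + 1) ≤ c 0 := by
      intro x hx
      exact hmono 0 (x + 1) (by omega) (by omega)
    have hmono' : ∀ x y, x ≤ y → y < a → c (y + 1) ≤ c (x + 1) := by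
      intro x y hxy hy
      exact hmono (x + 1) (y + 1) (by omega) (by omega)
    rcases Nat.eq_or_lt_of_le (hle 0 (by omega)) with hfull | hlt
    · -- c 0 = b
      have h1 := ih b (t - 1) (fun x => c (x + 1)) (by omega)
        (fun x hx => hle (x + 1) (by omega)) hmono'
      beta_reduce at h1
      have hble : b ≤ (∑ x ∈ Finset.range a, c (x + 1)) + c 0 := by omega
      rw [OV_rec b t _ (by omega) hble]
      have : (∑ x ∈ Finset.range a, c (x + 1)) + c 0 - b
          = ∑ x ∈ Finset.range a, c (x + 1) := by omega
      rw [this]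
      omega
    · -- c 0 < b
      have h1 := ih (b - 1) (t - 1) (fun x => c (x + 1)) (by omega)
        (fun x hx => by show c (x + 1) ≤ b - 1; have := htail x hx; omega) hmono'
      beta_reduce at h1
      have hsum : (∑ x ∈ Finset.range a, c (x + 1)) ≤ (b - 1) * c 0 := by
        calc (∑ x ∈ Finset.range a, c (x + 1)) ≤ ∑ _x ∈ Finset.range a, c 0 :=
              Finset.sum_le_sum (fun x hx => htail x (Finset.mem_range.mp hx))
          _ = a * c 0 := by rw [Finset.sum_const, Finset.card_range, smul_eq_mul]
          _ ≤ (b - 1) * c 0 := Nat.mul_le_mul_right _ (by omega)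
      have h2 := SL b (c 0) (∑ x ∈ Finset.range a, c (x + 1)) t hlt hsum
      have hcomm : c 0 + (∑ x ∈ Finset.range a, c (x + 1))
          = (∑ x ∈ Finset.range a, c (x + 1)) + c 0 := by omega
      rw [hcomm] at h2
      omega

def colOf (C : Finset (ℕ × ℕ)) (x : ℕ) : ℕ := (C.filter (fun p => p.1 = x)).card

lemma mem_box_iff' (l1 l2 : ℕ) (p : ℕ × ℕ) :
    p ∈ box l1 l2 ↔ p.1 < l1 ∧ p.2 < l2 := by
  simp [_root_.box]

lemma down_closed_iff (T : Finset ℕ) (h : ∀ y ∈ T, ∀ z, z ≤ y → z ∈ T) (y : ℕ) :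
    y ∈ T ↔ y < T.card := by
  constructor
  · intro hy
    have hsub : Finset.range (y + 1) ⊆ T := by
      intro z hz
      exact h y hy z (by simpa using Nat.lt_succ_iff.mp (Finset.mem_range.mp hz))
    have := Finset.card_le_card hsub
    simpa using this
  · intro hy
    by_contra hny
    have hsub : T ⊆ Finset.range y := by
      intro z hz
      rw [Finset.mem_range]
      by_contra hzy
      exact hny (h z hz y (by omega))
    have := Finset.card_le_card hsub
    simp at this
    omega

lemma col_mem {l1 l2 : ℕ} {C : Finset (ℕ × ℕ)} (hC : IsDownset (box l1 l2) C)
    (x y : ℕ) : (x, y) ∈ C ↔ y < colOf C x := by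
  classical
  set T : Finset ℕ := (C.filter (fun p => p.1 = x)).image (fun p => p.2) with hT
  have hcard : T.card = colOf C x := by
    rw [hT, colOf]
    apply Finset.card_image_of_injOn
    intro p hp q hq hpq
    simp only [Finset.mem_coe, Finset.mem_filter] at hp hq
    exact Prod.ext (hp.2.trans hq.2.symm) hpq
  have hmemT : ∀ y', y' ∈ T ↔ (x, y') ∈ C := by
    intro y'
    rw [hT]
    simp only [Finset.mem_image, Finset.mem_filter]
    constructor
    · rintro ⟨p, ⟨hpC, hpx⟩, hpy⟩
      have : p = (x, y') := Prod.ext hpx hpy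
      rwa [this] at hpC
    · intro h
      exact ⟨(x, y'), ⟨h, rfl⟩, rfl⟩
  have hdc : ∀ y' ∈ T, ∀ z, z ≤ y' → z ∈ T := by
    intro y' hy' z hz
    rw [hmemT] at hy' ⊢
    have hbox := (mem_box_iff' l1 l2 _).mp (hC.1 hy')
    exact hC.2 (x, z) ((mem_box_iff' l1 l2 _).mpr (by simp at hbox ⊢; omega))
      (x, y') hy' (le_refl _) hz
  rw [← hcard, ← hmemT y]
  exact down_closed_iff T hdc y

lemma col_le {l1 l2 : ℕ} {C : Finset (ℕ × ℕ)} (hC : IsDownset (box l1 l2) C)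
    (x : ℕ) : colOf C x ≤ l2 := by
  by_contra h
  push_neg at h
  have h2 : (x, l2) ∈ C := (col_mem hC x l2).mpr h
  have := (mem_box_iff' l1 l2 _).mp (hC.1 h2)
  simp at this

lemma col_anti {l1 l2 : ℕ} {C : Finset (ℕ × ℕ)} (hC : IsDownset (box l1 l2) C)
    (x y : ℕ) (hxy : x ≤ y) : colOf C y ≤ colOf C x := by
  by_contra h
  push_neg at h
  have h1 : (y, colOf C x) ∈ C := (col_mem hC y _).mpr h
  have hbox := (mem_box_iff' l1 l2 _).mp (hC.1 h1)
  simp at hbox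
  have h2 : (x, colOf C x) ∈ C := by
    apply hC.2 (x, colOf C x) _ (y, colOf C x) h1 hxy (le_refl _)
    rw [mem_box_iff']
    constructor
    · simp; omega
    · simp; omega
  have := (col_mem hC x _).mp h2
  omega

lemma col_zero_of_ge {l1 l2 : ℕ} {C : Finset (ℕ × ℕ)} (hsub : C ⊆ box l1 l2)
    (x : ℕ) (hx : l1 ≤ x) : colOf C x = 0 := by
  rw [colOf, Finset.card_eq_zero, Finset.filter_eq_empty_iff]
  intro p hp
  have := (mem_box_iff' l1 l2 _).mp (hsub hp)
  intro hpx
  omega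

lemma card_eq_sum_col {l1 l2 : ℕ} {C : Finset (ℕ × ℕ)} (hsub : C ⊆ box l1 l2) :
    C.card = ∑ x ∈ Finset.range l1, colOf C x := by
  apply Finset.card_eq_sum_card_fiberwise
  intro p hp
  have := (mem_box_iff' l1 l2 _).mp (hsub hp)
  exact Finset.mem_range.mpr this.1

lemma rank_count {l1 l2 : ℕ} {C : Finset (ℕ × ℕ)} (hC : IsDownset (box l1 l2) C)
    (t : ℕ) : (C.filter (fun p => t ≤ p.1 + p.2)).card
      = ∑ x ∈ Finset.range l1, (colOf C x - (t - x)) := by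
  classical
  rw [Finset.card_eq_sum_card_fiberwise
    (f := fun p => p.1) (t := Finset.range l1) ?_]
  · apply Finset.sum_congr rfl
    intro x _
    have heq : (C.filter (fun p => t ≤ p.1 + p.2)).filter (fun p => p.1 = x)
        = (Finset.Ico (t - x) (colOf C x)).image (fun y => (x, y)) := by
      ext p
      simp only [Finset.mem_filter, Finset.mem_image, Finset.mem_Ico]
      constructor
      · rintro ⟨⟨hpC, hrank⟩, hpx⟩
        refine ⟨p.2, ⟨by omega, ?_⟩, Prod.ext hpx.symm rfl⟩
        have hp2 : (x, p.2) = p := Prod.ext hpx.symm rfl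
        exact (col_mem hC x p.2).mp (hp2 ▸ hpC)
      · rintro ⟨y, ⟨hy1, hy2⟩, hEq⟩
        subst hEq
        exact ⟨⟨(col_mem hC x y).mpr hy2, by simp; omega⟩, rfl⟩
    rw [heq, Finset.card_image_of_injective _ (fun a b hab => by
      simpa using (Prod.ext_iff.mp hab).2), Nat.card_Ico]
  · intro p hp
    rw [Finset.mem_coe, Finset.mem_filter] at hp
    have := (mem_box_iff' l1 l2 _).mp (hC.1 hp.1)
    exact Finset.mem_range.mpr this.1


lemma initseg_downset {l1 l2 : ℕ} {A : Finset (ℕ × ℕ)}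
    (hA : IsInitSeg (box l1 l2) A lexLT) : IsDownset (box l1 l2) A := by
  refine ⟨hA.1, fun p hp q hq h1 h2 => ?_⟩
  rcases Nat.lt_or_ge p.1 q.1 with hlt | hge
  · exact hA.2 p hp q hq (Or.inl hlt)
  · have he1 : p.1 = q.1 := by omega
    rcases Nat.lt_or_ge p.2 q.2 with hlt2 | hge2
    · exact hA.2 p hp q hq (Or.inr ⟨he1, hlt2⟩)
    · have : p = q := Prod.ext he1 (by omega)
      rwa [this]

lemma lex_zero_after {l1 l2 : ℕ} {A : Finset (ℕ × ℕ)}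
    (hA : IsInitSeg (box l1 l2) A lexLT) (hl2 : 0 < l2)
    (x x' : ℕ) (hx' : x' < l1) (hxx' : x < x') (hcol : colOf A x < l2) :
    colOf A x' = 0 := by
  by_contra h
  have h0 : (x', 0) ∈ A := (col_mem (initseg_downset hA) x' 0).mpr (by omega)
  have h1 : (x, l2 - 1) ∈ A := by
    apply hA.2 (x, l2 - 1) _ (x', 0) h0 (Or.inl (by simp; omega))
    rw [mem_box_iff']
    constructor
    · simp; omega
    · simp; omega
  have := (col_mem (initseg_downset hA) x (l2 - 1)).mp h1
  omega

lemma split_sum_at {l1 x0 : ℕ} (hx0 : x0 ≤ l1) (F : ℕ → ℕ)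
    (hzero : ∀ x', x0 < x' → x' < l1 → F x' = 0) (hF0 : x0 = l1 → F x0 = 0) :
    ∑ x ∈ Finset.range l1, F x = (∑ x ∈ Finset.range x0, F x) + F x0 := by
  rw [Finset.range_eq_Ico, ← Finset.sum_Ico_consecutive _ (Nat.zero_le x0) hx0,
    ← Finset.range_eq_Ico]
  congr 1
  rcases Nat.eq_or_lt_of_le hx0 with he | hlt
  · subst he
    simp [hF0 rfl]
  · rw [Finset.sum_eq_sum_Ico_succ_bot hlt]
    have : ∑ x ∈ Finset.Ico (x0 + 1) l1, F x = 0 := by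
      apply Finset.sum_eq_zero
      intro x hx
      rw [Finset.mem_Ico] at hx
      exact hzero x (by omega) hx.2
    omega

lemma lex_eval {l1 l2 : ℕ} {A : Finset (ℕ × ℕ)}
    (hA : IsInitSeg (box l1 l2) A lexLT) (hl2 : 0 < l2) (t : ℕ) :
    (A.filter (fun p => t ≤ p.1 + p.2)).card = OV l2 t A.card := by
  classical
  have hAd := initseg_downset hA
  obtain ⟨x₀, hx₀le, hfull, hzero, hlt⟩ :
      ∃ x₀, x₀ ≤ l1 ∧ (∀ x, x < x₀ → colOf A x = l2) ∧
        (∀ x', x₀ < x' → x' < l1 → colOf A x' = 0) ∧ colOf A x₀ < l2 := by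
    by_cases hex : ∃ x, x < l1 ∧ colOf A x < l2
    · refine ⟨Nat.find hex, ?_, ?_, ?_, ?_⟩
      · exact le_of_lt (Nat.find_spec hex).1
      · intro x hx
        have hnot := Nat.find_min hex hx
        push_neg at hnot
        have h2 := col_le hAd (C := A) x
        have h3 := hnot (lt_trans hx (Nat.find_spec hex).1)
        omega
      · intro x' h1 h2
        exact lex_zero_after hA hl2 (Nat.find hex) x' h2 h1 (Nat.find_spec hex).2
      · exact (Nat.find_spec hex).2
    · push_neg at hex
      refine ⟨l1, le_refl _, ?_, ?_, ?_⟩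
      · intro x hx
        have := hex x hx
        have := col_le hAd (C := A) x
        omega
      · intro x' h1 h2; omega
      · rw [col_zero_of_ge hAd.1 l1 (le_refl _)]
        exact hl2
  have hx₀zero : x₀ = l1 → colOf A x₀ = 0 := by
    intro h; rw [h]; exact col_zero_of_ge hAd.1 l1 (le_refl _)
  have hn : A.card = x₀ * l2 + colOf A x₀ := by
    rw [card_eq_sum_col hAd.1]
    rw [split_sum_at hx₀le _ hzero hx₀zero]
    congr 1
    rw [Finset.sum_congr rfl (fun x hx => hfull x (Finset.mem_range.mp hx)),
      Finset.sum_const, Finset.card_range, smul_eq_mul]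
  have hdiv : A.card / l2 = x₀ := by
    rw [hn, Nat.mul_comm, Nat.mul_add_div hl2, Nat.div_eq_of_lt hlt]; omega
  have hmod : A.card % l2 = colOf A x₀ := by
    rw [hn, Nat.mul_comm, Nat.mul_add_mod, Nat.mod_eq_of_lt hlt]
  rw [rank_count hAd t, OV, hdiv, hmod]
  rw [split_sum_at hx₀le _ (fun x' h1 h2 => by rw [hzero x' h1 h2]; omega)
    (fun h => by rw [hx₀zero h]; omega)]
  congr 1
  apply Finset.sum_congr rfl
  intro x hx
  rw [hfull x (Finset.mem_range.mp hx)]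

theorem lex_optimal_succ (l1 l2 : ℕ) (h1 : 1 < l1) (h2 : l2 = l1 + 1)
    (wt : ℕ × ℕ → ℝ)
    (hrc : RankConstantOn (box l1 l2) wt) (hri : RankIncreasingOn (box l1 l2) wt)
    (A : Finset (ℕ × ℕ)) (hA : IsInitSeg (box l1 l2) A lexLT) :
    IsOptimalDownset (box l1 l2) wt A := by
  classical
  have hl1 : 0 < l1 := by omega
  have hl2 : 0 < l2 := by omega
  have hAd : IsDownset (box l1 l2) A := initseg_downset hA
  refine ⟨hAd, ?_⟩
  intro C hC hcard
  -- the counting inequality for every threshold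
  have count_le : ∀ t : ℕ, (C.filter (fun p => t ≤ p.1 + p.2)).card
      ≤ (A.filter (fun p => t ≤ p.1 + p.2)).card := by
    intro t
    rw [rank_count hC t, lex_eval hA hl2 t, ← hcard, card_eq_sum_col hC.1]
    exact core l1 l2 t (colOf C) (by omega)
      (fun x _ => col_le hC x)
      (fun x y hxy _ => col_anti hC x y hxy)
  -- rank representative point
  set R : ℕ := l1 + l2 - 2 with hR
  set pt : ℕ → ℕ × ℕ := fun r => (min r (l1 - 1), r - min r (l1 - 1)) with hpt
  have hptbox : ∀ r, r ≤ R → pt r ∈ box l1 l2 := by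
    intro r hr
    rw [mem_box_iff']
    constructor
    · simp only [hpt]; omega
    · simp only [hpt]; omega
  have hptrank : ∀ r, (pt r).1 + (pt r).2 = r := by
    intro r; simp only [hpt]; omega
  set g : ℕ → ℝ := fun r => wt (pt r) with hg
  have hrank_le : ∀ p ∈ box l1 l2, p.1 + p.2 ≤ R := by
    intro p hp
    have := (mem_box_iff' l1 l2 p).mp hp
    omega
  have hwt : ∀ p ∈ box l1 l2, wt p = g (p.1 + p.2) := by
    intro p hp
    exact hrc p hp (pt (p.1 + p.2)) (hptbox _ (hrank_le p hp))
      (by rw [hptrank])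
  have hmono : ∀ r, r + 1 ≤ R → g r < g (r + 1) := by
    intro r hr
    exact hri (pt r) (hptbox r (by omega)) (pt (r + 1)) (hptbox (r + 1) hr)
      (by rw [hptrank, hptrank]; omega)
  -- Abel-type expansion of the weight sum
  have expand : ∀ S : Finset (ℕ × ℕ), S ⊆ box l1 l2 →
      wtSum wt S = (S.card : ℝ) * g 0 +
        ∑ i ∈ Finset.range R,
          ((S.filter (fun p => i + 1 ≤ p.1 + p.2)).card : ℝ) * (g (i + 1) - g i) := by
    intro S hS
    rw [wtSum]
    have step1 : ∀ p ∈ S, wt p = g 0 + ∑ i ∈ Finset.range R,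
        (if i + 1 ≤ p.1 + p.2 then (g (i + 1) - g i) else 0) := by
      intro p hp
      rw [hwt p (hS hp)]
      have hle : p.1 + p.2 ≤ R := hrank_le p (hS hp)
      have htel : ∑ i ∈ Finset.range (p.1 + p.2), (g (i + 1) - g i)
          = g (p.1 + p.2) - g 0 := Finset.sum_range_sub g (p.1 + p.2)
      have hfilt : Finset.range (p.1 + p.2)
          = (Finset.range R).filter (fun i => i + 1 ≤ p.1 + p.2) := by
        ext i
        simp only [Finset.mem_range, Finset.mem_filter]
        omega
      rw [hfilt] at htel
      rw [Finset.sum_filter] at htel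
      rw [htel]
      ring
    rw [Finset.sum_congr rfl step1, Finset.sum_add_distrib, Finset.sum_const,
      nsmul_eq_mul]
    congr 1
    rw [Finset.sum_comm]
    apply Finset.sum_congr rfl
    intro i _
    rw [← Finset.sum_filter, Finset.sum_const, nsmul_eq_mul]
  rw [expand C hC.1, expand A hAd.1, hcard]
  apply (add_le_add_iff_left _).mpr
  apply Finset.sum_le_sum
  intro i hi
  have hd : (0:ℝ) ≤ g (i + 1) - g i := by
    have := hmono i (by
      have := Finset.mem_range.mp hi
      omega)
    linarith
  apply mul_le_mul_of_nonneg_right _ hd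
  exact_mod_cast count_le (i + 1)
end

section
/- Let M = [ℓ₁]₀ × [ℓ₂]₀ with 1 < ℓ₁ < ℓ₂, equipped with a rank increasing and rank constant weight function. Then every initial segment of the lexicographic order is a maximum weight downset of its size. -/
open Finset

namespace LexOpt


lemma mem_box {N L : ℕ} {p : ℕ × ℕ} : p ∈ box N L ↔ p.1 < N ∧ p.2 < L := by
  show p ∈ Finset.range N ×ˢ Finset.range L ↔ _
  rw [Finset.mem_product, Finset.mem_range, Finset.mem_range]

def rowCnt (C : Finset (ℕ × ℕ)) (i : ℕ) : ℕ := (C.filter fun p => p.1 = i).card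

def lowC (C : Finset (ℕ × ℕ)) (R : ℕ) : ℕ := (C.filter fun p => p.1 + p.2 < R).card

def upC (C : Finset (ℕ × ℕ)) (R : ℕ) : ℕ := (C.filter fun p => R ≤ p.1 + p.2).card

lemma down_range {S : Finset ℕ} (h : ∀ j ∈ S, ∀ k, k ≤ j → k ∈ S) : S = range S.card := by
  have hsub : range S.card ⊆ S := by
    intro k hk
    rw [Finset.mem_range] at hk
    by_contra hks
    have hsub2 : S ⊆ range k := by
      intro j hj
      rw [Finset.mem_range]
      by_contra hjk
      exact hks (h j hj k (by omega))
    have := Finset.card_le_card hsub2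
    rw [Finset.card_range] at this
    omega
  exact (Finset.eq_of_subset_of_card_le hsub (by rw [Finset.card_range])).symm

variable {N L : ℕ} {C : Finset (ℕ × ℕ)}

lemma mem_row (hC : IsDownset (box N L) C) (i j : ℕ) : (i, j) ∈ C ↔ j < rowCnt C i := by
  classical
  have hcard : ((C.filter fun p => p.1 = i).image Prod.snd).card = rowCnt C i := by
    rw [rowCnt]
    apply Finset.card_image_of_injOn
    rintro ⟨a, b⟩ ha ⟨c, d⟩ hc h
    simp only [Finset.coe_filter, Set.mem_setOf_eq] at ha hc
    simp only [Prod.mk.injEq]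
    exact ⟨ha.2.trans hc.2.symm, h⟩
  have hmem : ∀ j : ℕ, j ∈ (C.filter fun p => p.1 = i).image Prod.snd ↔ (i, j) ∈ C := by
    intro j
    simp only [Finset.mem_image, Finset.mem_filter]
    constructor
    · rintro ⟨p, ⟨hm, h1⟩, h2⟩
      subst h1; subst h2
      rw [Prod.mk.eta]
      exact hm
    · intro h
      exact ⟨(i, j), ⟨h, rfl⟩, rfl⟩
  have hdc : ∀ x ∈ (C.filter fun p => p.1 = i).image Prod.snd, ∀ k, k ≤ x →
      k ∈ (C.filter fun p => p.1 = i).image Prod.snd := by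
    intro x hx k hk
    rw [hmem] at hx ⊢
    have hbox := hC.1 hx
    rw [mem_box] at hbox
    exact hC.2 (i, k) (mem_box.2 ⟨hbox.1, by omega⟩) (i, x) hx le_rfl hk
  rw [← hmem, down_range hdc, hcard, Finset.mem_range]

lemma rowCnt_le (hC : IsDownset (box N L) C) (i : ℕ) : rowCnt C i ≤ L := by
  by_contra h
  push_neg at h
  have hm := (mem_row hC i L).2 (by omega)
  have := hC.1 hm
  rw [mem_box] at this
  omega

lemma rowCnt_anti (hC : IsDownset (box N L) C) {i i' : ℕ} (h : i ≤ i') :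
    rowCnt C i' ≤ rowCnt C i := by
  by_contra hlt
  push_neg at hlt
  have hm : (i', rowCnt C i) ∈ C := (mem_row hC i' _).2 hlt
  have hbox := hC.1 hm
  rw [mem_box] at hbox
  have : (i, rowCnt C i) ∈ C :=
    hC.2 (i, rowCnt C i) (mem_box.2 ⟨by omega, hbox.2⟩) (i', rowCnt C i) hm h le_rfl
  have := (mem_row hC i _).1 this
  omega

lemma card_rows (hC : IsDownset (box N L) C) : C.card = ∑ i ∈ range N, rowCnt C i := by
  apply Finset.card_eq_sum_card_fiberwise
  intro p hp
  rw [Finset.mem_coe, Finset.mem_range]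
  exact (mem_box.1 (hC.1 hp)).1

lemma rowlow (hC : IsDownset (box N L) C) (i R : ℕ) :
    ((C.filter fun p => p.1 + p.2 < R).filter fun p => p.1 = i).card
      = min (rowCnt C i) (R - i) := by
  have hset : ((C.filter fun p => p.1 + p.2 < R).filter fun p => p.1 = i)
      = {i} ×ˢ range (min (rowCnt C i) (R - i)) := by
    ext ⟨a, b⟩
    simp only [Finset.mem_filter, Finset.mem_product, Finset.mem_singleton, Finset.mem_range]
    constructor
    · rintro ⟨⟨hm, hlow⟩, rfl⟩
      have := (mem_row hC a b).1 hm
      exact ⟨rfl, by omega⟩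
    · rintro ⟨rfl, hb⟩
      exact ⟨⟨(mem_row hC a b).2 (by omega), by omega⟩, rfl⟩
  rw [hset, Finset.card_product, Finset.card_singleton, Finset.card_range, one_mul]

lemma lowC_eq_sum (hC : IsDownset (box N L) C) (R : ℕ) :
    lowC C R = ∑ i ∈ range N, min (rowCnt C i) (R - i) := by
  rw [lowC, Finset.card_eq_sum_card_fiberwise (f := Prod.fst) (t := range N)
    (fun p hp => Finset.mem_range.2 (mem_box.1 (hC.1 (Finset.mem_filter.1 hp).1)).1)]
  exact Finset.sum_congr rfl fun i _ => rowlow hC i R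

lemma low_add_up (C : Finset (ℕ × ℕ)) (R : ℕ) : lowC C R + upC C R = C.card := by
  classical
  rw [lowC, upC]
  have := Finset.card_filter_add_card_filter_not (s := C)
    (p := fun p : ℕ × ℕ => p.1 + p.2 < R)
  simp only [not_lt] at this
  exact this

-- row shift
def rowShift (C : Finset (ℕ × ℕ)) : Finset (ℕ × ℕ) :=
  (C.filter fun p => p.1 ≠ 0).image fun p => (p.1 - 1, p.2)

lemma mem_rowShift {C : Finset (ℕ × ℕ)} {p : ℕ × ℕ} :
    p ∈ rowShift C ↔ (p.1 + 1, p.2) ∈ C := by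
  obtain ⟨a, b⟩ := p
  simp only [rowShift, Finset.mem_image, Finset.mem_filter]
  constructor
  · rintro ⟨⟨x, y⟩, ⟨hm, hne⟩, heq⟩
    simp only [Prod.mk.injEq] at heq
    have : x = a + 1 := by omega
    subst this
    have : y = b := heq.2
    subst this
    exact hm
  · intro h
    exact ⟨(a + 1, b), ⟨h, by omega⟩, by simp⟩

lemma rowShift_downset (hC : IsDownset (box (N+1) L) C) :
    IsDownset (box N L) (rowShift C) := by
  constructor
  · intro p hp
    have := hC.1 (mem_rowShift.1 hp)
    rw [mem_box] at this ⊢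
    exact ⟨by omega, this.2⟩
  · intro p hp q hq h1 h2
    rw [mem_rowShift] at hq ⊢
    rw [mem_box] at hp
    exact hC.2 (p.1 + 1, p.2) (mem_box.2 ⟨by omega, hp.2⟩) (q.1 + 1, q.2) hq (by omega) h2

lemma rowShift_card (C : Finset (ℕ × ℕ)) : (rowShift C).card + rowCnt C 0 = C.card := by
  classical
  have h1 : (rowShift C).card = (C.filter fun p => p.1 ≠ 0).card := by
    apply Finset.card_image_of_injOn
    rintro ⟨a, b⟩ ha ⟨c, d⟩ hc h
    simp only [Finset.coe_filter, Set.mem_setOf_eq] at ha hc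
    simp only [Prod.mk.injEq] at h ⊢
    omega
  rw [h1, rowCnt]
  have := Finset.card_filter_add_card_filter_not (s := C)
    (p := fun p : ℕ × ℕ => p.1 = 0)
  simp only [ne_eq]
  omega

lemma lowC_shift_row (C : Finset (ℕ × ℕ)) (R : ℕ) :
    ((C.filter fun p => p.1 + p.2 < R).filter fun p => ¬(p.1 = 0)).card
      = lowC (rowShift C) (R - 1) := by
  rw [lowC]
  apply Finset.card_bij (fun p _ => (p.1 - 1, p.2))
  · rintro ⟨a, b⟩ ha
    simp only [Finset.mem_filter] at ha
    obtain ⟨⟨hm, hlow⟩, hne⟩ := ha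
    simp only [Finset.mem_filter]
    constructor
    · rw [mem_rowShift]
      show (a - 1 + 1, b) ∈ C
      rw [show a - 1 + 1 = a by omega]
      exact hm
    · show a - 1 + b < R - 1
      omega
  · rintro ⟨a, b⟩ ha ⟨c, d⟩ hc h
    simp only [Finset.mem_filter] at ha hc
    simp only [Prod.mk.injEq] at h ⊢
    omega
  · rintro ⟨a, b⟩ hb
    simp only [Finset.mem_filter] at hb
    obtain ⟨hm, hlow⟩ := hb
    rw [mem_rowShift] at hm
    refine ⟨(a + 1, b), ?_, by show ((a+1 : ℕ) - 1, b) = (a, b); rw [Nat.add_sub_cancel]⟩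
    simp only [Finset.mem_filter]
    exact ⟨⟨hm, by omega⟩, by omega⟩

lemma lowC_rowpeel (hC : IsDownset (box (N+1) L) C) (hfull : rowCnt C 0 = L) (R : ℕ) :
    lowC C R = min L R + lowC (rowShift C) (R - 1) := by
  classical
  rw [lowC]
  have := Finset.card_filter_add_card_filter_not
    (s := C.filter fun p => p.1 + p.2 < R) (p := fun p : ℕ × ℕ => p.1 = 0)
  rw [lowC_shift_row C R] at this
  have h0 := rowlow hC 0 R
  rw [hfull] at h0
  simp only [Nat.sub_zero] at h0
  omega

-- col shift
def colShift (C : Finset (ℕ × ℕ)) : Finset (ℕ × ℕ) :=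
  (C.filter fun p => p.2 ≠ 0).image fun p => (p.1, p.2 - 1)

lemma mem_colShift {C : Finset (ℕ × ℕ)} {p : ℕ × ℕ} :
    p ∈ colShift C ↔ (p.1, p.2 + 1) ∈ C := by
  obtain ⟨a, b⟩ := p
  simp only [colShift, Finset.mem_image, Finset.mem_filter]
  constructor
  · rintro ⟨⟨x, y⟩, ⟨hm, hne⟩, heq⟩
    simp only [Prod.mk.injEq] at heq
    have hy : y = b + 1 := by omega
    have hx : x = a := heq.1
    subst hy; subst hx
    exact hm
  · intro h
    exact ⟨(a, b + 1), ⟨h, by omega⟩, by simp⟩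

lemma colShift_downset (hC : IsDownset (box N L) C) :
    IsDownset (box N (L - 1)) (colShift C) := by
  constructor
  · intro p hp
    have := hC.1 (mem_colShift.1 hp)
    rw [mem_box] at this ⊢
    exact ⟨this.1, by omega⟩
  · intro p hp q hq h1 h2
    rw [mem_colShift] at hq ⊢
    rw [mem_box] at hp
    exact hC.2 (p.1, p.2 + 1) (mem_box.2 ⟨hp.1, by omega⟩) (q.1, q.2 + 1) hq h1 (by omega)

lemma colCnt_full (hC : IsDownset (box N L) C) (hcol : ∀ i < N, (i, 0) ∈ C) :
    (C.filter fun p => p.2 = 0) = (range N).image fun i => (i, 0) := by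
  ext ⟨a, b⟩
  simp only [Finset.mem_filter, Finset.mem_image, Finset.mem_range]
  constructor
  · rintro ⟨hm, rfl⟩
    exact ⟨a, (mem_box.1 (hC.1 hm)).1, rfl⟩
  · rintro ⟨i, hi, heq⟩
    simp only [Prod.mk.injEq] at heq
    obtain ⟨h1, h2⟩ := heq
    subst h1; subst h2
    exact ⟨hcol _ hi, rfl⟩

lemma colShift_card (hC : IsDownset (box N L) C) (hcol : ∀ i < N, (i, 0) ∈ C) :
    (colShift C).card + N = C.card := by
  classical
  have h1 : (colShift C).card = (C.filter fun p => p.2 ≠ 0).card := by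
    apply Finset.card_image_of_injOn
    rintro ⟨a, b⟩ ha ⟨c, d⟩ hc h
    simp only [Finset.coe_filter, Set.mem_setOf_eq] at ha hc
    simp only [Prod.mk.injEq] at h ⊢
    omega
  have h2 : (C.filter fun p => p.2 = 0).card = N := by
    rw [colCnt_full hC hcol, Finset.card_image_of_injOn (by
      intro a _ b _ h
      simpa using h), Finset.card_range]
  have := Finset.card_filter_add_card_filter_not (s := C)
    (p := fun p : ℕ × ℕ => p.2 = 0)
  simp only [ne_eq] at h1
  omega

lemma lowC_shift_col (C : Finset (ℕ × ℕ)) (R : ℕ) :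
    ((C.filter fun p => p.1 + p.2 < R).filter fun p => ¬(p.2 = 0)).card
      = lowC (colShift C) (R - 1) := by
  rw [lowC]
  apply Finset.card_bij (fun p _ => (p.1, p.2 - 1))
  · rintro ⟨a, b⟩ ha
    simp only [Finset.mem_filter] at ha
    obtain ⟨⟨hm, hlow⟩, hne⟩ := ha
    simp only [Finset.mem_filter]
    constructor
    · rw [mem_colShift]
      show (a, b - 1 + 1) ∈ C
      rw [show b - 1 + 1 = b by omega]
      exact hm
    · show a + (b - 1) < R - 1
      omega
  · rintro ⟨a, b⟩ ha ⟨c, d⟩ hc h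
    simp only [Finset.mem_filter] at ha hc
    simp only [Prod.mk.injEq] at h ⊢
    omega
  · rintro ⟨a, b⟩ hb
    simp only [Finset.mem_filter] at hb
    obtain ⟨hm, hlow⟩ := hb
    rw [mem_colShift] at hm
    refine ⟨(a, b + 1), ?_, by show (a, (b+1 : ℕ) - 1) = (a, b); rw [Nat.add_sub_cancel]⟩
    simp only [Finset.mem_filter]
    exact ⟨⟨hm, by omega⟩, by omega⟩

lemma lowC_colpeel (hC : IsDownset (box N L) C) (hcol : ∀ i < N, (i, 0) ∈ C) (R : ℕ) :
    lowC C R = min N R + lowC (colShift C) (R - 1) := by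
  classical
  rw [lowC]
  have hsplit := Finset.card_filter_add_card_filter_not
    (s := C.filter fun p => p.1 + p.2 < R) (p := fun p : ℕ × ℕ => p.2 = 0)
  rw [lowC_shift_col C R] at hsplit
  have h0 : ((C.filter fun p => p.1 + p.2 < R).filter fun p => p.2 = 0)
      = (range (min N R)).image fun i => (i, 0) := by
    ext ⟨a, b⟩
    simp only [Finset.mem_filter, Finset.mem_image, Finset.mem_range]
    constructor
    · rintro ⟨⟨hm, hlow⟩, rfl⟩
      have := (mem_box.1 (hC.1 hm)).1
      exact ⟨a, by omega, rfl⟩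
    · rintro ⟨i, hi, heq⟩
      simp only [Prod.mk.injEq] at heq
      obtain ⟨h1, h2⟩ := heq
      subst h1; subst h2
      exact ⟨⟨hcol _ (by omega), by omega⟩, rfl⟩
  have h0c : ((C.filter fun p => p.1 + p.2 < R).filter fun p => p.2 = 0).card = min N R := by
    rw [h0, Finset.card_image_of_injOn (by intro a _ b _ h; simpa using h), Finset.card_range]
  omega

-- transpose
def trC (C : Finset (ℕ × ℕ)) : Finset (ℕ × ℕ) := C.image fun p => (p.2, p.1)

lemma tr_inj : Function.Injective (fun p : ℕ × ℕ => (p.2, p.1)) := by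
  rintro ⟨a, b⟩ ⟨c, d⟩ h
  simp only [Prod.mk.injEq] at h ⊢
  omega

lemma mem_trC {C : Finset (ℕ × ℕ)} {p : ℕ × ℕ} : p ∈ trC C ↔ (p.2, p.1) ∈ C := by
  obtain ⟨a, b⟩ := p
  simp only [trC, Finset.mem_image]
  constructor
  · rintro ⟨⟨x, y⟩, hm, heq⟩
    simp only [Prod.mk.injEq] at heq
    obtain ⟨rfl, rfl⟩ := heq
    exact hm
  · intro h
    exact ⟨(b, a), h, rfl⟩

lemma trC_card (C : Finset (ℕ × ℕ)) : (trC C).card = C.card :=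
  Finset.card_image_of_injective C tr_inj

lemma trC_downset (hC : IsDownset (box N L) C) : IsDownset (box L N) (trC C) := by
  constructor
  · intro p hp
    have := hC.1 (mem_trC.1 hp)
    rw [mem_box] at this ⊢
    exact ⟨this.2, this.1⟩
  · intro p hp q hq h1 h2
    rw [mem_trC] at hq ⊢
    rw [mem_box] at hp
    exact hC.2 (p.2, p.1) (mem_box.2 ⟨hp.2, hp.1⟩) (q.2, q.1) hq h2 h1

lemma trC_lowC (C : Finset (ℕ × ℕ)) (R : ℕ) : lowC (trC C) R = lowC C R := by
  rw [lowC, lowC]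
  apply Finset.card_bij (fun p _ => ((p.2 : ℕ), p.1))
  · rintro ⟨a, b⟩ ha
    simp only [Finset.mem_filter] at ha ⊢
    rw [mem_trC] at ha
    refine ⟨ha.1, ?_⟩
    show b + a < R
    have : a + b < R := ha.2
    omega
  · rintro ⟨a, b⟩ _ ⟨c, d⟩ _ h
    simp only [Prod.mk.injEq] at h ⊢
    omega
  · rintro ⟨a, b⟩ hb
    simp only [Finset.mem_filter] at hb
    refine ⟨(b, a), ?_, rfl⟩
    simp only [Finset.mem_filter]
    rw [mem_trC]
    refine ⟨hb.1, ?_⟩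
    show b + a < R
    have : a + b < R := hb.2
    omega



def aProf (L m i : ℕ) : ℕ := min L (m - i * L)

def lexLow (N L m R : ℕ) : ℕ := ∑ i ∈ Finset.range N, min (aProf L m i) (R - i)

lemma aProf_zero (L m : ℕ) : aProf L m 0 = min L m := by
  simp [aProf]

lemma aProf_succ (L m i : ℕ) (h : L ≤ m) : aProf L m (i+1) = aProf L (m - L) i := by
  unfold aProf
  rw [show (i+1)*L = L + i*L by ring, Nat.sub_add_eq]

lemma aProf_succ_zero (L m i : ℕ) (h : m ≤ L) : aProf L m (i+1) = 0 := by
  unfold aProf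
  have hle : m ≤ (i+1)*L := le_trans h (by
    calc L = 1*L := (one_mul L).symm
    _ ≤ (i+1)*L := Nat.mul_le_mul_right L (by omega))
  rw [Nat.sub_eq_zero_of_le hle]
  simp

lemma lexLow_zero_rows (L m R : ℕ) : lexLow 0 L m R = 0 := by
  simp [lexLow]

lemma lexLow_drop (N L m R : ℕ) (h : m ≤ N * L) : lexLow (N+1) L m R = lexLow N L m R := by
  unfold lexLow
  rw [Finset.sum_range_succ]
  have : aProf L m N = 0 := by
    unfold aProf
    rw [Nat.sub_eq_zero_of_le h]
    simp
  rw [this]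
  simp

lemma lexLow_rowpeel (N L m R : ℕ) (h : L ≤ m) :
    lexLow (N+1) L m R = min L R + lexLow N L (m - L) (R - 1) := by
  unfold lexLow
  rw [Finset.sum_range_succ']
  have h0 : min (aProf L m 0) (R - 0) = min L R := by
    rw [aProf_zero, Nat.min_eq_left h]
    simp
  rw [h0]
  rw [Finset.sum_congr rfl (fun i _ => by
    rw [aProf_succ L m i h, show R - (i+1) = R - 1 - i by omega])]
  omega

lemma lexLow_small (N L m R : ℕ) (hN : 1 ≤ N) (h : m ≤ L) : lexLow N L m R = min m R := by
  obtain ⟨n, rfl⟩ : ∃ n, N = n + 1 := ⟨N - 1, by omega⟩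
  unfold lexLow
  rw [Finset.sum_range_succ']
  have h0 : min (aProf L m 0) (R - 0) = min m R := by
    rw [aProf_zero, Nat.min_comm L m, Nat.min_eq_left h]
    simp
  rw [h0]
  rw [Finset.sum_congr rfl (fun i _ => by rw [aProf_succ_zero L m i h, Nat.zero_min])]
  simp

theorem colpeel (m : ℕ) : ∀ N L R : ℕ, 1 ≤ N → N < L → N ≤ m → m ≤ N * (L - 1) →
    lexLow N L m R ≤ min N R + lexLow N (L-1) (m - N) (R - 1) := by
  induction m using Nat.strong_induction_on with
  | _ m IH =>
    intro N L R h1 h2 h3 h4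
    by_cases hbig : N + L - 1 ≤ m
    · -- recursive case
      have hN2 : 2 ≤ N := by
        by_contra hc
        have : N = 1 := by omega
        subst this
        rw [one_mul] at h4
        omega
      obtain ⟨n, rfl⟩ : ∃ n, N = n + 1 := ⟨N - 1, by omega⟩
      have hLm : L ≤ m := by omega
      have hL1m : L - 1 ≤ m - (n+1) := by omega
      rw [lexLow_rowpeel n L m R hLm, lexLow_rowpeel n (L-1) (m - (n+1)) (R-1) hL1m]
      have hprod : (n+1) * (L-1) = n * (L-1) + (L-1) := by ring
      rw [hprod] at h4
      obtain ⟨P, hP⟩ : ∃ P, n * (L-1) = P := ⟨_, rfl⟩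
      have hIH := IH (m - L) (by omega) n L (R-1) (by omega) (by omega) (by omega)
        (by rw [hP] at h4 ⊢; omega)
      rw [show m - (n+1) - (L-1) = m - L - n by omega, show R - 1 - 1 = R - 2 by omega]
      rw [show R - 1 - 1 = R - 2 by omega] at hIH
      omega
    · -- base case
      have hb2 : m - N ≤ L - 1 := by omega
      rw [lexLow_small N (L-1) (m - N) (R-1) h1 hb2]
      by_cases hmL : m ≤ L
      · rw [lexLow_small N L m R h1 hmL]
        omega
      · have hN2 : 2 ≤ N := by omega
        obtain ⟨n, rfl⟩ : ∃ n, N = n + 1 := ⟨N - 1, by omega⟩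
        rw [lexLow_rowpeel n L m R (by omega)]
        rw [lexLow_small n L (m - L) (R-1) (by omega) (by omega)]
        omega




variable {N L : ℕ} {C : Finset (ℕ × ℕ)}

theorem key : ∀ k N L (C : Finset (ℕ × ℕ)) (R : ℕ), N + L ≤ k → N ≤ L →
    IsDownset (box N L) C → lexLow N L C.card R ≤ lowC C R := by
  intro k
  induction k with
  | zero =>
    intro N L C R hk hNL hC
    have hN : N = 0 := by omega
    subst hN
    rw [lexLow_zero_rows]
    exact Nat.zero_le _
  | succ k IH =>
    intro N L C R hk hNL hC
    match N, hk, hNL, hC with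
    | 0, hk, hNL, hC =>
      rw [lexLow_zero_rows]
      exact Nat.zero_le _
    | n+1, hk, hNL, hC =>
      by_cases hlast : rowCnt C n = 0
      · -- last row empty
        have hC' : IsDownset (box n L) C := by
          constructor
          · intro p hp
            have hb := hC.1 hp
            rw [mem_box] at hb ⊢
            refine ⟨?_, hb.2⟩
            rcases Nat.lt_or_ge p.1 n with h | h
            · exact h
            · exfalso
              have hpn : p.1 = n := by omega
              have : (n, p.2) ∈ C := by rw [← hpn]; exact hp
              have := (mem_row hC n p.2).1 this
              omega
          · intro p hp q hq hx hy
            rw [mem_box] at hp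
            exact hC.2 p (mem_box.2 ⟨by omega, hp.2⟩) q hq hx hy
        have hm : C.card ≤ n * L := by
          rw [card_rows hC']
          calc ∑ i ∈ Finset.range n, rowCnt C i ≤ ∑ _i ∈ Finset.range n, L :=
              Finset.sum_le_sum fun i _ => rowCnt_le hC' i
          _ = n * L := by rw [Finset.sum_const, Finset.card_range, smul_eq_mul]
        rw [lexLow_drop n L C.card R hm]
        exact IH n L C R (by omega) (by omega) hC'
      by_cases hfull : rowCnt C 0 = L
      · -- first row full
        have hLm : L ≤ C.card := by
          rw [← hfull, rowCnt]
          exact Finset.card_filter_le C _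
        rw [lexLow_rowpeel n L C.card R hLm, lowC_rowpeel hC hfull R]
        apply Nat.add_le_add_left
        have hcard : (rowShift C).card = C.card - L := by
          have := rowShift_card C
          omega
        have := IH n L (rowShift C) (R - 1) (by omega) (by omega) (rowShift_downset hC)
        rw [hcard] at this
        exact this
      · -- rows all nonempty, first row not full
        have hlast1 : 1 ≤ rowCnt C n := by omega
        have hcol : ∀ i < n+1, (i, 0) ∈ C := by
          intro i hi
          have : 1 ≤ rowCnt C i := le_trans hlast1 (rowCnt_anti hC (by omega))
          exact (mem_row hC i 0).2 this
        have hmN : n + 1 ≤ C.card := by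
          rw [card_rows hC]
          calc n + 1 = ∑ _i ∈ Finset.range (n+1), 1 := by
                rw [Finset.sum_const, Finset.card_range, smul_eq_mul, mul_one]
          _ ≤ ∑ i ∈ Finset.range (n+1), rowCnt C i := by
                apply Finset.sum_le_sum
                intro i hi
                rw [Finset.mem_range] at hi
                exact le_trans hlast1 (rowCnt_anti hC (by omega))
        by_cases hlt : n + 1 < L
        · -- column peel
          have hcap : C.card ≤ (n+1) * (L-1) := by
            rw [card_rows hC]
            calc ∑ i ∈ Finset.range (n+1), rowCnt C i
                ≤ ∑ _i ∈ Finset.range (n+1), (L-1) := by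
                  apply Finset.sum_le_sum
                  intro i _
                  have h1 := rowCnt_anti hC (Nat.zero_le i)
                  have h2 := rowCnt_le hC 0
                  omega
            _ = (n+1) * (L-1) := by rw [Finset.sum_const, Finset.card_range, smul_eq_mul]
          have harith := colpeel C.card (n+1) L R (by omega) hlt hmN hcap
          have hcard : (colShift C).card = C.card - (n+1) := by
            have := colShift_card hC hcol
            omega
          have hIH := IH (n+1) (L-1) (colShift C) (R-1) (by omega) (by omega)
            (colShift_downset hC)
          rw [hcard] at hIH
          calc lexLow (n+1) L C.card R
              ≤ min (n+1) R + lexLow (n+1) (L-1) (C.card - (n+1)) (R-1) := harith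
          _ ≤ min (n+1) R + lowC (colShift C) (R-1) := Nat.add_le_add_left hIH _
          _ = lowC C R := (lowC_colpeel hC hcol R).symm
        · -- square: transpose
          have hEq : L = n + 1 := by omega
          subst hEq
          set D := trC C with hD
          have hCd : IsDownset (box (n+1) (n+1)) D := trC_downset hC
          have hfullD : rowCnt D 0 = n + 1 := by
            have hmem : ((0 : ℕ), n) ∈ D := by
              rw [hD, mem_trC]
              exact hcol n (by omega)
            have h1 := (mem_row hCd 0 n).1 hmem
            have h2 := rowCnt_le hCd 0
            omega
          have hcardD : D.card = C.card := trC_card C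
          have hlowD : lowC D R = lowC C R := trC_lowC C R
          have hLm : n + 1 ≤ C.card := hmN
          rw [← hlowD, lowC_rowpeel hCd hfullD R, ← hcardD]
          rw [lexLow_rowpeel n (n+1) D.card R (by omega)]
          apply Nat.add_le_add_left
          have hcard2 : (rowShift D).card = D.card - (n+1) := by
            have := rowShift_card D
            omega
          have hIH := IH n (n+1) (rowShift D) (R-1) (by omega) (by omega)
            (rowShift_downset hCd)
          rw [hcard2] at hIH
          exact hIH



end LexOpt

namespace LexOpt

lemma initseg_downset {N L : ℕ} {A : Finset (ℕ × ℕ)} (h : IsInitSeg (box N L) A lexLT) :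
    IsDownset (box N L) A := by
  constructor
  · exact h.1
  · intro p hp q hq h1 h2
    rcases eq_or_ne p q with rfl | hne
    · exact hq
    · apply h.2 p hp q hq
      rcases Nat.lt_or_ge p.1 q.1 with hx | hx
      · exact Or.inl hx
      · have hpq : p.1 = q.1 := by omega
        refine Or.inr ⟨hpq, ?_⟩
        rcases Nat.lt_or_ge p.2 q.2 with hy | hy
        · exact hy
        · exact absurd (Prod.ext hpq (by omega)) hne

lemma initseg_profile {N L : ℕ} {A : Finset (ℕ × ℕ)} (hA : IsInitSeg (box N L) A lexLT)
    (hL : 1 ≤ L) : ∀ i < N, rowCnt A i = aProf L A.card i := by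
  have hD := initseg_downset hA
  have hfulla : ∀ i' i : ℕ, i' < i → i < N → 1 ≤ rowCnt A i → rowCnt A i' = L := by
    intro i' i hlt hiN hpos
    have hi0 : (i, 0) ∈ A := (mem_row hD i 0).2 hpos
    have hall : ∀ j < L, (i', j) ∈ A := by
      intro j hj
      exact hA.2 (i', j) (mem_box.2 ⟨by omega, hj⟩) (i, 0) hi0 (Or.inl hlt)
    have hc1 : L - 1 < rowCnt A i' := (mem_row hD i' (L-1)).1 (hall (L-1) (by omega))
    have hc2 := rowCnt_le hD i'
    omega
  intro i hiN
  have hsplit : ∑ k ∈ Finset.range N, rowCnt A k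
      = ∑ k ∈ Finset.range i, rowCnt A k + ∑ k ∈ Finset.Ico i N, rowCnt A k := by
    rw [Finset.range_eq_Ico, Finset.range_eq_Ico,
      Finset.sum_Ico_consecutive _ (Nat.zero_le i) (le_of_lt hiN)]
  rcases Nat.lt_or_ge (rowCnt A i) L with hlt | hge
  · rcases Nat.eq_zero_or_pos (rowCnt A i) with hz | hpos
    · have hm : A.card ≤ i * L := by
        rw [card_rows hD, hsplit]
        have hzero : ∑ k ∈ Finset.Ico i N, rowCnt A k = 0 := by
          apply Finset.sum_eq_zero
          intro k hk
          rw [Finset.mem_Ico] at hk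
          have := rowCnt_anti hD hk.1
          omega
        rw [hzero, add_zero]
        calc ∑ k ∈ Finset.range i, rowCnt A k ≤ ∑ _k ∈ Finset.range i, L :=
            Finset.sum_le_sum fun k _ => rowCnt_le hD k
        _ = i * L := by rw [Finset.sum_const, Finset.card_range, smul_eq_mul]
      unfold aProf
      rw [Nat.sub_eq_zero_of_le hm, hz]
      simp
    · have hfull' : ∀ k < i, rowCnt A k = L := fun k hk => hfulla k i hk hiN hpos
      have hzero : ∀ kk, i < kk → kk < N → rowCnt A kk = 0 := by
        intro kk hik hkN
        by_contra hc
        have := hfulla i kk hik hkN (by omega)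
        omega
      have hm : A.card = i * L + rowCnt A i := by
        rw [card_rows hD, hsplit]
        have hIco : ∑ k ∈ Finset.Ico i N, rowCnt A k = rowCnt A i := by
          apply Finset.sum_eq_single_of_mem i (Finset.mem_Ico.2 ⟨le_rfl, hiN⟩)
          intro b hb hbne
          rw [Finset.mem_Ico] at hb
          exact hzero b (by omega) hb.2
        have hrangei : ∑ k ∈ Finset.range i, rowCnt A k = i * L := by
          rw [Finset.sum_congr rfl (fun k hk => hfull' k (Finset.mem_range.1 hk)),
            Finset.sum_const, Finset.card_range, smul_eq_mul]
        rw [hIco, hrangei]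
      unfold aProf
      omega
  · have hiL : rowCnt A i = L := le_antisymm (rowCnt_le hD i) hge
    have hfull' : ∀ k ≤ i, rowCnt A k = L := by
      intro k hk
      rcases eq_or_lt_of_le hk with rfl | hk'
      · exact hiL
      · exact hfulla k i hk' hiN (by omega)
    have hm : (i+1) * L ≤ A.card := by
      rw [card_rows hD]
      calc (i+1) * L = ∑ _k ∈ Finset.range (i+1), L := by
            rw [Finset.sum_const, Finset.card_range, smul_eq_mul]
      _ = ∑ k ∈ Finset.range (i+1), rowCnt A k :=
          (Finset.sum_congr rfl fun k hk => (hfull' k (by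
            rw [Finset.mem_range] at hk; omega)).symm)
      _ ≤ ∑ k ∈ Finset.range N, rowCnt A k :=
          Finset.sum_le_sum_of_subset (Finset.range_subset_range.2 (by omega))
    unfold aProf
    have hexp : (i+1) * L = i * L + L := by ring
    omega

end LexOpt

theorem lex_optimal (l1 l2 : ℕ) (h1 : 1 < l1) (h2 : l1 < l2)
    (wt : ℕ × ℕ → ℝ)
    (hrc : RankConstantOn (box l1 l2) wt) (hri : RankIncreasingOn (box l1 l2) wt)
    (A : Finset (ℕ × ℕ)) (hA : IsInitSeg (box l1 l2) A lexLT) :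
    IsOptimalDownset (box l1 l2) wt A := by
  classical
  have hAD : IsDownset (box l1 l2) A := LexOpt.initseg_downset hA
  refine ⟨hAD, ?_⟩
  intro C hC hcard
  set K := l1 + l2 - 2 with hK
  set W : ℕ → ℝ := fun r => wt (min r (l1 - 1), r - min r (l1 - 1)) with hW
  have hptmem : ∀ r, r ≤ K → (min r (l1-1), r - min r (l1-1)) ∈ box l1 l2 := by
    intro r hr
    rw [LexOpt.mem_box]
    exact ⟨by show min r (l1-1) < l1; omega, by show r - min r (l1-1) < l2; omega⟩
  have hWeq : ∀ p ∈ box l1 l2, wt p = W (p.1 + p.2) := by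
    intro p hp
    have hple : p.1 + p.2 ≤ K := by
      have := LexOpt.mem_box.1 hp
      omega
    apply hrc p hp _ (hptmem _ hple)
    show p.1 + p.2 = min (p.1+p.2) (l1-1) + ((p.1+p.2) - min (p.1+p.2) (l1-1))
    omega
  have hWmono : ∀ kk : ℕ, kk + 1 ≤ K → W kk ≤ W (kk+1) := by
    intro kk hkk
    apply le_of_lt
    apply hri _ (hptmem kk (by omega)) _ (hptmem (kk+1) hkk)
    show min kk (l1-1) + (kk - min kk (l1-1)) < min (kk+1) (l1-1) + ((kk+1) - min (kk+1) (l1-1))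
    omega
  have hform : ∀ D : Finset (ℕ × ℕ), D ⊆ box l1 l2 →
      wtSum wt D = (D.card : ℝ) * W 0
        + ∑ kk ∈ Finset.range K, (LexOpt.upC D (kk+1) : ℝ) * (W (kk+1) - W kk) := by
    intro D hD
    have hterm : ∀ p ∈ D, wt p = W 0
        + ∑ kk ∈ Finset.range K, (if kk + 1 ≤ p.1 + p.2 then W (kk+1) - W kk else 0) := by
      intro p hp
      have hple : p.1 + p.2 ≤ K := by
        have := LexOpt.mem_box.1 (hD hp)
        omega
      have ht : ∑ kk ∈ Finset.range (p.1+p.2), (W (kk+1) - W kk) = W (p.1+p.2) - W 0 :=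
        Finset.sum_range_sub W (p.1+p.2)
      have hfilt : (Finset.range K).filter (fun kk => kk + 1 ≤ p.1 + p.2)
          = Finset.range (p.1+p.2) := by
        ext x
        simp only [Finset.mem_filter, Finset.mem_range]
        omega
      rw [hWeq p (hD hp), ← Finset.sum_filter, hfilt, ht]
      ring
    rw [wtSum, Finset.sum_congr rfl hterm, Finset.sum_add_distrib, Finset.sum_const,
      Finset.sum_comm]
    congr 1
    · rw [nsmul_eq_mul]
    · apply Finset.sum_congr rfl
      intro kk _
      rw [← Finset.sum_filter, Finset.sum_const, LexOpt.upC, nsmul_eq_mul]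
  have hupA : ∀ R, LexOpt.lowC A R = LexOpt.lexLow l1 l2 A.card R := by
    intro R
    rw [LexOpt.lowC_eq_sum hAD R, LexOpt.lexLow]
    apply Finset.sum_congr rfl
    intro i hi
    rw [Finset.mem_range] at hi
    rw [LexOpt.initseg_profile hA (by omega) i hi]
  have hup : ∀ R, LexOpt.upC C R ≤ LexOpt.upC A R := by
    intro R
    have hkey := LexOpt.key (l1 + l2) l1 l2 C R le_rfl (by omega) hC
    rw [hcard] at hkey
    have hA2 := hupA R
    have h3 := LexOpt.low_add_up C R
    have h4 := LexOpt.low_add_up A R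
    rw [hcard] at h3
    omega
  rw [hform C hC.1, hform A hAD.1, hcard]
  apply add_le_add le_rfl
  apply Finset.sum_le_sum
  intro kk hkk
  rw [Finset.mem_range] at hkk
  apply mul_le_mul_of_nonneg_right
  · exact_mod_cast hup (kk+1)
  · have := hWmono kk (by omega)
    linarith
end
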